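/- Let μ : ℂ^{n+1} → ℝⁿ be the map μ([z]) defined on ℂℙⁿ in homogeneous coordinates by μ([z₀,…,zₙ]) = (−π/∑ᵢ|zᵢ|²) · (∑_{j≥1} C_{j1}|z_j|², …, ∑_{j≥1} C_{jn}|z_j|²) + t for a fixed matrix C ∈ GL(n,ℝ) and constant t ∈ ℝⁿ. Then the image μ(ℂℙⁿ) equals the image of the standard n-simplex {x ∈ ℝⁿ : xₖ ≥ 0, ∑ₖ xₖ ≤ 1} under the affine map x ↦ −π Cᵀ x + t; in particular it is a convex polytope in ℝⁿ. -/

import Mathlib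

/-!
The moment map factors as `z ↦ −π Cᵀ w(z) + t`, where `wⱼ(z) = |zⱼ|² / ∑ᵢ |zᵢ|²` for `j ≥ 1`.
The weights `w(z)` are nonnegative with sum at most `1`, and every such `x` arises, from the
vector `(√(1 - ∑ₖ xₖ), √x₁, …, √xₙ)`. So the image is the affine image of the simplex, which is
convex because the simplex is.
-/

open Finset Matrix

variable {𝕜 : Type*} [RCLike 𝕜] {n : ℕ}

def cornerSimplex (n : ℕ) : Set (Fin n → ℝ) := {x | (∀ k, 0 ≤ x k) ∧ ∑ k, x k ≤ 1}

theorem convex_cornerSimplex (n : ℕ) : Convex ℝ (cornerSimplex n) := by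
  have hsum : IsLinearMap ℝ fun x : Fin n → ℝ => ∑ k, x k :=
    ⟨fun _ _ => sum_add_distrib, fun _ _ => (mul_sum ..).symm⟩
  exact (convex_Ici 0).inter (convex_halfSpace_le hsum 1)

theorem sum_norm_sq_pos {z : Fin n → 𝕜} (hz : z ≠ 0) : 0 < ∑ i, ‖z i‖ ^ 2 := by
  obtain ⟨i, hi⟩ := Function.ne_iff.mp hz
  exact sum_pos' (fun j _ => by positivity) ⟨i, mem_univ i, by positivity⟩

/-- The coordinates `x₁, …, xₙ` of the point `xⱼ = |zⱼ|² / ∑ᵢ |zᵢ|²` of the standard simplex;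
`x₀` is determined by them. -/
noncomputable def normalizedTailWeights (z : Fin (n + 1) → 𝕜) : Fin n → ℝ :=
  fun j => ‖z j.succ‖ ^ 2 / ∑ i, ‖z i‖ ^ 2

theorem normalizedTailWeights_mem_cornerSimplex {z : Fin (n + 1) → 𝕜} (hz : z ≠ 0) :
    normalizedTailWeights z ∈ cornerSimplex n := by
  refine ⟨fun k => by unfold normalizedTailWeights; positivity, ?_⟩
  have hS := sum_norm_sq_pos hz
  unfold normalizedTailWeights
  rw [← sum_div, div_le_one hS, Fin.sum_univ_succ]
  linarith [sq_nonneg ‖z 0‖]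

/-- A unit vector whose squared moduli are `1 - ∑ₖ xₖ, x₁, …, xₙ`. -/
noncomputable def simplexLift (x : Fin n → ℝ) : Fin (n + 1) → 𝕜 :=
  Fin.cons (√(1 - ∑ k, x k) : 𝕜) fun j => (√(x j) : 𝕜)

theorem norm_sq_simplexLift_zero {x : Fin n → ℝ} (hx : x ∈ cornerSimplex n) :
    ‖(simplexLift x : Fin (n + 1) → 𝕜) 0‖ ^ 2 = 1 - ∑ k, x k := by
  simp [simplexLift, Real.sq_sqrt (sub_nonneg.mpr hx.2)]

theorem norm_sq_simplexLift_succ {x : Fin n → ℝ} (hx : x ∈ cornerSimplex n) (j : Fin n) :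
    ‖(simplexLift x : Fin (n + 1) → 𝕜) j.succ‖ ^ 2 = x j := by
  simp [simplexLift, Real.sq_sqrt (hx.1 j)]

theorem sum_norm_sq_simplexLift {x : Fin n → ℝ} (hx : x ∈ cornerSimplex n) :
    ∑ i, ‖(simplexLift x : Fin (n + 1) → 𝕜) i‖ ^ 2 = 1 := by
  simp only [Fin.sum_univ_succ, norm_sq_simplexLift_zero hx, norm_sq_simplexLift_succ hx]
  ring

theorem normalizedTailWeights_simplexLift {x : Fin n → ℝ} (hx : x ∈ cornerSimplex n) :
    normalizedTailWeights (simplexLift x : Fin (n + 1) → 𝕜) = x := by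
  ext j
  unfold normalizedTailWeights
  rw [sum_norm_sq_simplexLift hx, norm_sq_simplexLift_succ hx, div_one]

theorem image_normalizedTailWeights :
    normalizedTailWeights '' {z : Fin (n + 1) → 𝕜 | z ≠ 0} = cornerSimplex n := by
  refine Set.Subset.antisymm (Set.image_subset_iff.mpr fun z hz =>
    normalizedTailWeights_mem_cornerSimplex hz) fun x hx => ⟨simplexLift x, ?_,
    normalizedTailWeights_simplexLift hx⟩
  intro h
  have := sum_norm_sq_simplexLift (𝕜 := 𝕜) hx
  simp [h] at this

noncomputable def momentAffineMap (C : Matrix (Fin n) (Fin n) ℝ) (t : Fin n → ℝ) :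
    (Fin n → ℝ) →ᵃ[ℝ] (Fin n → ℝ) :=
  (-Real.pi • Cᵀ.mulVecLin).toAffineMap + AffineMap.const ℝ _ t

theorem coe_momentAffineMap (C : Matrix (Fin n) (Fin n) ℝ) (t : Fin n → ℝ) :
    ⇑(momentAffineMap C t) = fun x k => -Real.pi * (Cᵀ *ᵥ x) k + t k := by
  ext x k
  simp [momentAffineMap, mulVec_transpose]

theorem moment_eq_momentAffineMap_normalizedTailWeights (C : Matrix (Fin n) (Fin n) ℝ)
    (t : Fin n → ℝ) (z : Fin (n + 1) → 𝕜) :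
    (fun k => (-Real.pi / ∑ i, ‖z i‖ ^ 2) * (∑ j, C j k * ‖z j.succ‖ ^ 2) + t k) =
      momentAffineMap C t (normalizedTailWeights z) := by
  ext k
  simp only [coe_momentAffineMap, mulVec, dotProduct, transpose_apply,
    normalizedTailWeights, mul_sum]
  congr 1
  refine sum_congr rfl fun j _ => ?_
  ring

theorem stmt16_general {n : ℕ} (C : Matrix (Fin n) (Fin n) ℝ)
    (t : Fin n → ℝ) :
    ((fun z : Fin (n + 1) → ℂ => fun k : Fin n =>
        (-Real.pi / ∑ i, ‖z i‖ ^ 2) * (∑ j : Fin n, C j k * ‖z j.succ‖ ^ 2) + t k) ''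
      {z | z ≠ 0}
    = (fun x : Fin n → ℝ => fun k : Fin n => -Real.pi * (C.transpose.mulVec x) k + t k) ''
      {x | (∀ k, 0 ≤ x k) ∧ ∑ k, x k ≤ 1}) ∧
    Convex ℝ
      ((fun z : Fin (n + 1) → ℂ => fun k : Fin n =>
        (-Real.pi / ∑ i, ‖z i‖ ^ 2) * (∑ j : Fin n, C j k * ‖z j.succ‖ ^ 2) + t k) ''
      {z | z ≠ 0}) := by
  have hμ : (fun z : Fin (n + 1) → ℂ => fun k : Fin n =>
        (-Real.pi / ∑ i, ‖z i‖ ^ 2) * (∑ j : Fin n, C j k * ‖z j.succ‖ ^ 2) + t k) =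
      momentAffineMap C t ∘ normalizedTailWeights :=
    funext (moment_eq_momentAffineMap_normalizedTailWeights C t)
  rw [hμ, Set.image_comp, image_normalizedTailWeights, ← coe_momentAffineMap]
  exact ⟨rfl, (convex_cornerSimplex n).affine_image _⟩

/-- The image of the moment map `μ([z₀,…,zₙ]) = (−π/∑|zᵢ|²)·(∑_{j≥1} C_{jk}|z_j|²)ₖ + t` on
`ℂℙⁿ` (computed on nonzero homogeneous coordinate vectors) equals the image of the standard
`n`-simplex under the affine map `x ↦ −π Cᵀ x + t`; in particular it is convex. -/
theorem stmt16 {n : ℕ} (C : Matrix (Fin n) (Fin n) ℝ) (hC : IsUnit C.det)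
    (t : Fin n → ℝ) :
    ((fun z : Fin (n + 1) → ℂ => fun k : Fin n =>
        (-Real.pi / ∑ i, ‖z i‖ ^ 2) * (∑ j : Fin n, C j k * ‖z j.succ‖ ^ 2) + t k) ''
      {z | z ≠ 0}
    = (fun x : Fin n → ℝ => fun k : Fin n => -Real.pi * (C.transpose.mulVec x) k + t k) ''
      {x | (∀ k, 0 ≤ x k) ∧ ∑ k, x k ≤ 1}) ∧
    Convex ℝ
      ((fun z : Fin (n + 1) → ℂ => fun k : Fin n =>
        (-Real.pi / ∑ i, ‖z i‖ ^ 2) * (∑ j : Fin n, C j k * ‖z j.succ‖ ^ 2) + t k) ''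
      {z | z ≠ 0}) :=
  stmt16_general C t
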